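/- Let $\psi_\varepsilon: [0,\pi] \to \mathbb{R}$ be a family of functions of the form $\psi_\varepsilon = \psi + \eta_\varepsilon$ where $\psi(\theta) = \frac{1}{4\pi}\sin\frac{\theta}{2}$ and $(\varepsilon, \theta) \mapsto \eta_\varepsilon(\theta)$ is $C^2$ with $\eta_0 = 0$, and suppose $\psi_\varepsilon'(\pi) = 0$ for all $\varepsilon$. Then for all sufficiently small $\varepsilon > 0$, $\psi_\varepsilon'(\theta) > 0$ for all $0 \le \theta < \pi$, i.e., $\psi_\varepsilon$ is strictly increasing on $[0,\pi]$. -/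

import Mathlib

/-! The `θ`-derivative `g(ε, θ)` of `ψ_ε` vanishes at `θ = π` and, by continuity of `∂_θ g`,
has slope close to `ψ''(π) < 0` near `(0, π)`; so `g(ε, ·)` is strictly decreasing to `0` on a
fixed interval `[c, π]`, hence positive on `[c, π)`, for all small `ε`. On the compact interval
`[0, c]` the function `g(0, ·) = ψ'` is positive, and by the tube lemma `g(ε, ·)` stays positive
there for small `ε`. -/

open Set Real

noncomputable section

def psiFun (θ : ℝ) : ℝ := (1 / (4 * π)) * Real.sin (θ / 2)

open Filter Topology

lemma strictMonoOn_Icc_of_hasDerivWithinAt_pos {f f' : ℝ → ℝ} {a b : ℝ}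
    (hf : ∀ x ∈ Icc a b, HasDerivWithinAt f (f' x) (Icc a b) x)
    (hpos : ∀ x ∈ Ioo a b, 0 < f' x) : StrictMonoOn f (Icc a b) := by
  refine strictMonoOn_of_hasDerivWithinAt_pos (f' := f') (convex_Icc a b)
    (fun x hx => (hf x hx).continuousWithinAt) (fun x hx => ?_)
    (fun x hx => hpos x (by rwa [interior_Icc] at hx))
  rw [interior_Icc] at hx ⊢
  exact (hf x (Ioo_subset_Icc_self hx)).mono Ioo_subset_Icc_self

lemma strictAntiOn_Icc_of_hasDerivWithinAt_neg {f f' : ℝ → ℝ} {a b : ℝ}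
    (hf : ∀ x ∈ Icc a b, HasDerivWithinAt f (f' x) (Icc a b) x)
    (hneg : ∀ x ∈ Ioo a b, f' x < 0) : StrictAntiOn f (Icc a b) := by
  refine strictAntiOn_of_hasDerivWithinAt_neg (f' := f') (convex_Icc a b)
    (fun x hx => (hf x hx).continuousWithinAt) (fun x hx => ?_)
    (fun x hx => hneg x (by rwa [interior_Icc] at hx))
  rw [interior_Icc] at hx ⊢
  exact (hf x (Ioo_subset_Icc_self hx)).mono Ioo_subset_Icc_self

section Parametric

variable {X Y : Type*} [TopologicalSpace X] [TopologicalSpace Y] {x₀ : X}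

lemma IsCompact.eventually_forall_mem_of_continuousOn {Z : Type*} [TopologicalSpace Z]
    {K : Set Y} (hK : IsCompact K) {g : X × Y → Z} (hg : ContinuousOn g (univ ×ˢ K))
    {U : Set Z} (hU : IsOpen U) (hgU : ∀ y ∈ K, g (x₀, y) ∈ U) :
    ∀ᶠ x in 𝓝 x₀, ∀ y ∈ K, g (x, y) ∈ U := by
  have := hK.eventually_forall_of_forall_eventually (x₀ := x₀)
    (P := fun x y => y ∈ K → g (x, y) ∈ U) fun y hy =>
      mem_nhdsWithin_iff_eventually.1 (hg (x₀, y) ⟨trivial, hy⟩ (hU.mem_nhds (hgU y hy)))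
        |>.mono fun p hp hpK => hp ⟨trivial, hpK⟩
  exact this.mono fun x hx y hy => hx y hy hy

lemma exists_eventually_forall_Ico_pos {a b : ℝ} (hab : a < b) {g h : X × ℝ → ℝ}
    (hgh : ∀ x, ∀ θ ∈ Icc a b, HasDerivWithinAt (fun θ => g (x, θ)) (h (x, θ)) (Icc a b) θ)
    (hh : ContinuousWithinAt h (univ ×ˢ Icc a b) (x₀, b)) (hh₀ : h (x₀, b) < 0)
    (hgb : ∀ x, g (x, b) = 0) :
    ∃ c ∈ Ico a b, ∀ᶠ x in 𝓝 x₀, ∀ θ ∈ Ico c b, 0 < g (x, θ) := by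
  have hneg : ∀ᶠ p in 𝓝 x₀ ×ˢ 𝓝[≤] b, h p < 0 := by
    rw [← nhdsWithin_Icc_eq_nhdsLE hab, ← nhdsWithin_univ, ← nhdsWithin_prod_eq]
    exact hh (Iio_mem_nhds hh₀)
  obtain ⟨P, hP, Q, hQ, hPQ⟩ := eventually_prod_iff.1 hneg
  obtain ⟨l, hlb, hlQ⟩ := (mem_nhdsLE_iff_exists_Ioc_subset' hab).1 hQ
  have hc : max a l ∈ Ico a b := ⟨le_max_left a l, max_lt hab hlb⟩
  refine ⟨max a l, hc, hP.mono fun x hx θ hθ => ?_⟩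
  have hIcc : Icc (max a l) b ⊆ Icc a b := Icc_subset_Icc_left hc.1
  have hanti : StrictAntiOn (fun θ => g (x, θ)) (Icc (max a l) b) :=
    strictAntiOn_Icc_of_hasDerivWithinAt_neg (fun θ hθ => (hgh x θ (hIcc hθ)).mono hIcc)
      fun θ hθ => hPQ hx (hlQ ⟨(le_max_right a l).trans_lt hθ.1, hθ.2.le⟩)
  simpa [hgb x] using hanti (Ico_subset_Icc_self hθ) (right_mem_Icc.2 hc.2.le) hθ.2

lemma eventually_forall_Ico_pos {a b : ℝ} (hab : a < b) {g h : X × ℝ → ℝ}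
    (hg : ContinuousOn g (univ ×ˢ Icc a b))
    (hgh : ∀ x, ∀ θ ∈ Icc a b, HasDerivWithinAt (fun θ => g (x, θ)) (h (x, θ)) (Icc a b) θ)
    (hh : ContinuousWithinAt h (univ ×ˢ Icc a b) (x₀, b)) (hh₀ : h (x₀, b) < 0)
    (hgb : ∀ x, g (x, b) = 0) (hg₀ : ∀ θ ∈ Ico a b, 0 < g (x₀, θ)) :
    ∀ᶠ x in 𝓝 x₀, ∀ θ ∈ Ico a b, 0 < g (x, θ) := by
  obtain ⟨c, hc, hnear⟩ := exists_eventually_forall_Ico_pos hab hgh hh hh₀ hgb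
  have hfar : ∀ᶠ x in 𝓝 x₀, ∀ θ ∈ Icc a c, g (x, θ) ∈ Ioi 0 :=
    isCompact_Icc.eventually_forall_mem_of_continuousOn
      (hg.mono (prod_mono subset_rfl (Icc_subset_Icc_right hc.2.le))) isOpen_Ioi
      fun θ hθ => hg₀ θ ⟨hθ.1, hθ.2.trans_lt hc.2⟩
  filter_upwards [hnear, hfar] with x hxnear hxfar θ hθ
  rcases le_or_gt θ c with hθc | hθc
  · exact hxfar θ ⟨hθ.1, hθc⟩
  · exact hxnear θ ⟨hθc.le, hθ.2⟩

end Parametric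

section PartialDeriv

variable {E : Type*} [NormedAddCommGroup E] [NormedSpace ℝ E]

def partialSnd (F : ℝ × ℝ → E) (s : Set (ℝ × ℝ)) (p : ℝ × ℝ) : E :=
  fderivWithin ℝ F s p (0, 1)

lemma ContDiffOn.partialSnd {F : ℝ × ℝ → E} {s : Set (ℝ × ℝ)} {m n : WithTop ℕ∞}
    (hF : ContDiffOn ℝ n F s) (hs : UniqueDiffOn ℝ s) (hmn : m + 1 ≤ n) :
    ContDiffOn ℝ m (partialSnd F s) s :=
  (hF.fderivWithin hs hmn).clm_apply contDiffOn_const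

lemma DifferentiableOn.hasDerivWithinAt_partialSnd {F : ℝ × ℝ → E} {t : Set ℝ}
    (hF : DifferentiableOn ℝ F (univ ×ˢ t)) (x : ℝ) {θ : ℝ} (hθ : θ ∈ t) :
    HasDerivWithinAt (fun θ => F (x, θ)) (partialSnd F (univ ×ˢ t) (x, θ)) t θ :=
  (hF (x, θ) ⟨trivial, hθ⟩).hasFDerivWithinAt.comp_hasDerivWithinAt θ
    ((hasDerivWithinAt_const θ t x).prodMk (hasDerivWithinAt_id θ t)) fun _ hθ => ⟨trivial, hθ⟩

lemma DifferentiableOn.partialSnd_eq {F : ℝ × ℝ → E} {t : Set ℝ} {f : ℝ → E} {f' : E} {x θ : ℝ}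
    (hF : DifferentiableOn ℝ F (univ ×ˢ t)) (ht : UniqueDiffOn ℝ t) (hθ : θ ∈ t)
    (hFf : ∀ θ ∈ t, F (x, θ) = f θ) (hf : HasDerivAt f f' θ) :
    partialSnd F (univ ×ˢ t) (x, θ) = f' :=
  (ht θ hθ).eq_deriv t
    ((hF.hasDerivWithinAt_partialSnd x hθ).congr (fun θ hθ => (hFf θ hθ).symm) (hFf θ hθ).symm)
    hf.hasDerivWithinAt

end PartialDeriv

lemma contDiff_psiFun {n : WithTop ℕ∞} : ContDiff ℝ n psiFun :=
  contDiff_const.mul (contDiff_sin.comp (contDiff_id.div_const (2 : ℝ)))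

lemma hasDerivAt_psiFun (θ : ℝ) :
    HasDerivAt psiFun ((1 / (8 * π)) * Real.cos (θ / 2)) θ :=
  ((((hasDerivAt_id' θ).div_const 2).sin).const_mul (1 / (4 * π))).congr_deriv (by ring)

lemma hasDerivAt_deriv_psiFun (θ : ℝ) :
    HasDerivAt (fun t => (1 / (8 * π)) * Real.cos (t / 2))
      (-((1 / (16 * π)) * Real.sin (θ / 2))) θ :=
  ((((hasDerivAt_id' θ).div_const 2).cos).const_mul (1 / (8 * π))).congr_deriv (by ring)

def psiEps (η : ℝ → ℝ → ℝ) (p : ℝ × ℝ) : ℝ := psiFun p.2 + η p.1 p.2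

lemma contDiffOn_psiEps {η : ℝ → ℝ → ℝ} {s : Set (ℝ × ℝ)} {n : WithTop ℕ∞}
    (hη : ContDiffOn ℝ n (fun p : ℝ × ℝ => η p.1 p.2) s) : ContDiffOn ℝ n (psiEps η) s :=
  (contDiff_psiFun.comp contDiff_snd).contDiffOn.add hη

lemma eventually_forall_Ico_pos_partialSnd_psiEps {η : ℝ → ℝ → ℝ}
    (hη : ContDiffOn ℝ 2 (fun p : ℝ × ℝ => η p.1 p.2) (univ ×ˢ Icc 0 π))
    (hη0 : ∀ θ ∈ Icc (0 : ℝ) π, η 0 θ = 0)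
    (hπ : ∀ ε, partialSnd (psiEps η) (univ ×ˢ Icc 0 π) (ε, π) = 0) :
    ∀ᶠ ε in 𝓝 0, ∀ θ ∈ Ico 0 π, 0 < partialSnd (psiEps η) (univ ×ˢ Icc 0 π) (ε, θ) := by
  have hI : UniqueDiffOn ℝ (Icc (0 : ℝ) π) := uniqueDiffOn_Icc pi_pos
  have hs : UniqueDiffOn ℝ (univ ×ˢ Icc (0 : ℝ) π) :=
    (uniqueDiffOn_univ (𝕜 := ℝ) (E := ℝ)).prod hI
  have hF := contDiffOn_psiEps hη
  set g := partialSnd (psiEps η) (univ ×ˢ Icc 0 π)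
  have hg : ContDiffOn ℝ 1 g (univ ×ˢ Icc 0 π) := hF.partialSnd hs le_rfl
  have hg₀ : ∀ θ ∈ Icc 0 π, g (0, θ) = (1 / (8 * π)) * Real.cos (θ / 2) := fun θ hθ =>
    (hF.differentiableOn two_ne_zero).partialSnd_eq (x := 0) hI hθ
      (fun θ hθ => by simp [psiEps, hη0 θ hθ]) (hasDerivAt_psiFun θ)
  have hπ_mem : π ∈ Icc (0 : ℝ) π := right_mem_Icc.2 pi_pos.le
  have hh₀ : partialSnd g (univ ×ˢ Icc 0 π) (0, π) < 0 := by
    rw [(hg.differentiableOn one_ne_zero).partialSnd_eq hI hπ_mem hg₀ (hasDerivAt_deriv_psiFun π),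
      sin_pi_div_two, mul_one, neg_lt_zero]
    exact div_pos one_pos (by positivity)
  refine eventually_forall_Ico_pos pi_pos hg.continuousOn
    (hg.differentiableOn one_ne_zero).hasDerivWithinAt_partialSnd
    ((hg.partialSnd (m := 0) hs (by norm_num)).continuousOn _ ⟨trivial, hπ_mem⟩) hh₀ hπ
    fun θ hθ => ?_
  rw [hg₀ θ (Ico_subset_Icc_self hθ)]
  have := cos_pos_of_mem_Ioo (x := θ / 2) ⟨by linarith [pi_pos, hθ.1], by linarith [hθ.2]⟩
  positivity

/-- If `ψ_ε = ψ + η_ε` with `(ε, θ) ↦ η_ε(θ)` of class `C²`, `η_0 = 0`, and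
`ψ_ε'(π) = 0` for all `ε`, then for all sufficiently small `ε > 0` the function `ψ_ε`
satisfies `ψ_ε'(θ) > 0` on `[0, π)` and is strictly increasing on `[0, π]`. -/
theorem stmt_14 (η : ℝ → ℝ → ℝ)
    (hη : ContDiffOn ℝ 2 (fun p : ℝ × ℝ => η p.1 p.2) (univ ×ˢ Icc 0 π))
    (hη0 : ∀ θ ∈ Icc (0 : ℝ) π, η 0 θ = 0)
    (hd : ∀ ε : ℝ, derivWithin (fun θ => psiFun θ + η ε θ) (Icc 0 π) π = 0) :
    ∃ ε₀ > 0, ∀ ε : ℝ, 0 < ε → ε < ε₀ →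
      (∀ θ ∈ Ico (0 : ℝ) π,
        0 < derivWithin (fun θ' => psiFun θ' + η ε θ') (Icc 0 π) θ) ∧
      StrictMonoOn (fun θ => psiFun θ + η ε θ) (Icc 0 π) := by
  have hI : UniqueDiffOn ℝ (Icc (0 : ℝ) π) := uniqueDiffOn_Icc pi_pos
  have hderiv : ∀ ε, ∀ θ ∈ Icc (0 : ℝ) π, HasDerivWithinAt (fun θ => psiFun θ + η ε θ)
      (partialSnd (psiEps η) (univ ×ˢ Icc 0 π) (ε, θ)) (Icc 0 π) θ := fun ε θ hθ =>
    ((contDiffOn_psiEps hη).differentiableOn two_ne_zero).hasDerivWithinAt_partialSnd ε hθ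
  have hπ : π ∈ Icc (0 : ℝ) π := right_mem_Icc.2 pi_pos.le
  obtain ⟨ε₀, hε₀, hpos⟩ := Metric.eventually_nhds_iff.1 <|
    eventually_forall_Ico_pos_partialSnd_psiEps hη hη0 fun ε =>
      ((hderiv ε π hπ).derivWithin (hI π hπ)).symm.trans (hd ε)
  refine ⟨ε₀, hε₀, fun ε hε hεε₀ => ?_⟩
  have hposε := hpos (by rwa [Real.dist_eq, sub_zero, abs_of_pos hε])
  refine ⟨fun θ hθ => ?_, strictMonoOn_Icc_of_hasDerivWithinAt_pos (hderiv ε)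
    fun θ hθ => hposε θ (Ioo_subset_Ico_self hθ)⟩
  rw [(hderiv ε θ (Ico_subset_Icc_self hθ)).derivWithin (hI θ (Ico_subset_Icc_self hθ))]
  exact hposε θ hθ
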